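/- If A is a thin set of positive integers (i.e., ∑_{a∈A} 1/a < ∞), then the set of multiples M(A) = {an : a ∈ A, n ∈ ℕ} has an asymptotic density. Moreover, if 1 ∉ A, then the asymptotic density of M(A) is strictly less than 1. -/

import Mathlib

/-!
For a finite set `F` of positive integers the multiples of `F` form a periodic set, so they have
a density `δ F`. Truncating a thin set `A` to `F_k = A ∩ [1, k]` changes the count of multiples
up to `N` by at most `N ∑_{a ∈ A, a > k} 1 / a`, a tail that tends to `0`; hence the densities
`δ F_k` form a Cauchy sequence and the counting ratios of the multiples of `A` converge to its
limit.

For the bound `d < 1`, the Heilbronn–Rohrbach inequality `1 - δ F ≥ ∏_{a ∈ F} (1 - 1 / a)` and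
`1 - x ≥ exp (-2x)` on `[0, 1/2]` give `1 - δ F_k ≥ exp (-2 ∑_{a ∈ A} 1 / a) > 0` uniformly in `k`
as soon as `1 ∉ A`.
-/

open Filter Topology ArithmeticFunction

/-- Number of elements of `A` in `[1, N]`. -/
noncomputable def cnt (A : Set ℕ) (N : ℕ) : ℕ := (A ∩ Set.Icc 1 N).ncard

/-- `A ⊆ ℕ` has asymptotic density `d`. -/
def HasDensity (A : Set ℕ) (d : ℝ) : Prop :=
  Filter.Tendsto (fun N : ℕ => (cnt A N : ℝ) / N) Filter.atTop (nhds d)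

/-- `A` is thin: the sum of the reciprocals of its elements converges. -/
def Thin (A : Set ℕ) : Prop := Summable (fun a : A => (1 : ℝ) / a)

/-- Differs from `{a * n | a ∈ A, 0 < n}` at most at `0`, which `cnt` never sees; unlike that set
it is periodic (also at `0`) with any period divisible by every element of `A`. -/
def multiples (A : Set ℕ) : Set ℕ := {m | ∃ a ∈ A, a ∣ m}

section Counting

open scoped Finset

variable {S T : Set ℕ}

lemma cnt_le_cnt_of_pos_imp (h : ∀ m, 0 < m → m ∈ S → m ∈ T) (N : ℕ) : cnt S N ≤ cnt T N :=
  Set.ncard_le_ncard (fun m ⟨hS, hm⟩ => ⟨h m hm.1 hS, hm⟩) ((Set.finite_Icc 1 N).inter_of_right T)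

lemma cnt_congr (h : ∀ m, 0 < m → (m ∈ S ↔ m ∈ T)) : cnt S = cnt T :=
  funext fun N => (cnt_le_cnt_of_pos_imp (fun m hm => (h m hm).1) N).antisymm
    (cnt_le_cnt_of_pos_imp (fun m hm => (h m hm).2) N)

lemma cnt_union_le (S T : Set ℕ) (N : ℕ) : cnt (S ∪ T) N ≤ cnt S N + cnt T N := by
  rw [cnt, Set.union_inter_distrib_right]
  exact Set.ncard_union_le _ _

lemma cnt_add_cnt_compl (S : Set ℕ) (N : ℕ) : cnt S N + cnt Sᶜ N = N := by
  rw [cnt, cnt, Set.inter_comm, Set.inter_comm Sᶜ, ← Set.sdiff_eq,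
    Set.ncard_inter_add_ncard_sdiff_eq_ncard _ _ (Set.finite_Icc 1 N), Set.ncard_Icc_nat]
  omega

lemma cnt_eq_card_filter [DecidablePred (· ∈ S)] (N : ℕ) :
    cnt S N = #{m ∈ Finset.Icc 1 N | m ∈ S} := by
  rw [cnt, ← Set.ncard_coe_finset, Finset.coe_filter]
  congr 1
  ext m
  simp only [Set.mem_inter_iff, Set.mem_Icc, Finset.mem_Icc, Set.mem_ofPred_eq]
  tauto

lemma cnt_add_period {L : ℕ} (hS : Function.Periodic (· ∈ S) L) (N : ℕ) :
    cnt S (N + L) = cnt S N + cnt S L := by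
  classical
  have hwindow (n : ℕ) : #{m ∈ Finset.Ico (n + 1) (n + 1 + L) | m ∈ S} = L.count (· ∈ S) :=
    Nat.filter_Ico_card_eq_of_periodic _ _ _ hS
  have hsplit : Finset.Icc 1 (N + L) = Finset.Icc 1 N ∪ Finset.Ico (N + 1) (N + 1 + L) := by
    ext m; simp only [Finset.mem_union, Finset.mem_Icc, Finset.mem_Ico]; omega
  have hdisj : Disjoint (Finset.Icc 1 N) (Finset.Ico (N + 1) (N + 1 + L)) := by
    rw [Finset.disjoint_left]; intro m; simp only [Finset.mem_Icc, Finset.mem_Ico]; omega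
  rw [cnt_eq_card_filter, cnt_eq_card_filter, cnt_eq_card_filter, hsplit, Finset.filter_union,
    Finset.card_union_of_disjoint (Finset.disjoint_filter_filter hdisj), hwindow,
    ← hwindow 0, zero_add, add_comm 1 L, Finset.Ico_add_one_right_eq_Icc]

lemma cnt_mul_period {L : ℕ} (hS : Function.Periodic (· ∈ S) L) (c : ℕ) :
    cnt S (c * L) = c * cnt S L := by
  induction c with
  | zero => simp [cnt]
  | succ c ih => rw [add_mul, one_mul, cnt_add_period hS, ih, add_mul, one_mul]

lemma cnt_mono (S : Set ℕ) {N M : ℕ} (h : N ≤ M) : cnt S N ≤ cnt S M :=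
  Set.ncard_le_ncard (Set.inter_subset_inter_right S (Set.Icc_subset_Icc_right h))
    ((Set.finite_Icc 1 M).inter_of_right S)

end Counting

section Density

lemma tendsto_div_of_abs_sub_mul_le {u : ℕ → ℝ} {x C : ℝ} (h : ∀ N : ℕ, |u N - N * x| ≤ C) :
    Tendsto (fun N : ℕ => u N / N) atTop (𝓝 x) := by
  have herr : Tendsto (fun N : ℕ => (u N - N * x) / N) atTop (𝓝 0) :=
    squeeze_zero_norm (fun N => by rw [norm_div, Real.norm_natCast]; gcongr; exact h N)
      (tendsto_const_div_atTop_nhds_zero_nat C)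
  refine (zero_add x ▸ herr.add_const x).congr' ?_
  filter_upwards [eventually_ne_atTop 0] with N hN
  field_simp
  ring

variable {S : Set ℕ}

lemma hasDensity_of_periodic {L : ℕ} (hL : 0 < L) (hS : Function.Periodic (· ∈ S) L) :
    HasDensity S (cnt S L / L) := by
  refine tendsto_div_of_abs_sub_mul_le (C := cnt S L) fun N => ?_
  have hN : N / L * L ≤ N ∧ N ≤ N / L * L + L := ⟨Nat.div_mul_le_self N L, by
    have := Nat.lt_div_mul_add hL (a := N); omega⟩
  have hcnt : N / L * cnt S L ≤ cnt S N ∧ cnt S N ≤ N / L * cnt S L + cnt S L := by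
    rw [← cnt_mul_period hS, ← cnt_add_period hS]
    exact ⟨cnt_mono S hN.1, cnt_mono S hN.2⟩
  have hLR : (0 : ℝ) < L := by exact_mod_cast hL
  have hNR : ((N / L : ℕ) : ℝ) * L ≤ N ∧ (N : ℝ) ≤ (N / L : ℕ) * L + L := by
    exact_mod_cast hN
  have hcntR : ((N / L : ℕ) : ℝ) * cnt S L ≤ cnt S N ∧
      (cnt S N : ℝ) ≤ (N / L : ℕ) * cnt S L + cnt S L := by
    exact_mod_cast hcnt
  have hmul : (N : ℝ) * (cnt S L / L) = N / L * cnt S L := by ring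
  have hq : ((N / L : ℕ) : ℝ) ≤ N / L ∧ (N : ℝ) / L ≤ (N / L : ℕ) + 1 := by
    constructor
    · rw [le_div_iff₀ hLR]; exact hNR.1
    · rw [div_le_iff₀ hLR]; linarith [hNR.2]
  rw [hmul, abs_le]
  have hc : (0 : ℝ) ≤ cnt S L := Nat.cast_nonneg _
  constructor <;> nlinarith [hq.1, hq.2, hcntR.1, hcntR.2]

lemma HasDensity.compl {d : ℝ} (h : HasDensity S d) : HasDensity Sᶜ (1 - d) := by
  refine (tendsto_const_nhds.sub h).congr' ?_
  filter_upwards [eventually_ne_atTop 0] with N hN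
  have hsum : (cnt S N : ℝ) + cnt Sᶜ N = N := by exact_mod_cast cnt_add_cnt_compl S N
  field_simp
  linarith

end Density

lemma exists_tendsto_of_forall_dist_le {α ι : Type*} [PseudoMetricSpace α] [CompleteSpace α]
    {l : Filter ι} [l.NeBot] {f : ι → α} {g : ℕ → ι → α} {δ : ℕ → α} {ε : ℕ → ℝ}
    (hg : ∀ k, Tendsto (g k) l (𝓝 (δ k))) (hε : Tendsto ε atTop (𝓝 0))
    (hfg : ∀ k i, dist (f i) (g k i) ≤ ε k) :
    ∃ d, Tendsto f l (𝓝 d) ∧ Tendsto δ atTop (𝓝 d) := by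
  have hδ (k m : ℕ) : dist (δ k) (δ m) ≤ ε k + ε m :=
    le_of_tendsto ((hg k).dist (hg m)) (Eventually.of_forall fun i =>
      (dist_triangle_left _ _ (f i)).trans (add_le_add (hfg k i) (hfg m i)))
  have hcauchy : CauchySeq δ := by
    refine Metric.cauchySeq_iff'.2 fun e he => ?_
    obtain ⟨K, hK⟩ := eventually_atTop.1 (hε.eventually (gt_mem_nhds (half_pos he)))
    exact ⟨K, fun k hk => (hδ k K).trans_lt (by linarith [hK k hk, hK K le_rfl])⟩
  obtain ⟨d, hd⟩ := cauchySeq_tendsto_of_complete hcauchy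
  have hunif : TendstoUniformly g f atTop := by
    refine Metric.tendstoUniformly_iff.2 fun e he => ?_
    filter_upwards [hε.eventually (gt_mem_nhds he)] with k hk i
    exact (hfg k i).trans_lt hk
  exact ⟨d, hunif.tendsto_of_eventually_tendsto (Eventually.of_forall hg) hd, hd⟩

lemma multiples_periodic {F : Set ℕ} {L : ℕ} (hL : ∀ a ∈ F, a ∣ L) :
    Function.Periodic (· ∈ multiples F) L := fun _ =>
  propext ⟨fun ⟨a, ha, hm⟩ => ⟨a, ha, (Nat.dvd_add_left (hL a ha)).1 hm⟩,
    fun ⟨a, ha, hm⟩ => ⟨a, ha, (Nat.dvd_add_left (hL a ha)).2 hm⟩⟩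

lemma multiples_mono {A B : Set ℕ} (h : A ⊆ B) : multiples A ⊆ multiples B :=
  fun _ ⟨a, ha, ham⟩ => ⟨a, h ha, ham⟩

lemma mem_multiples_insert {b : ℕ} {F : Set ℕ} {m : ℕ} :
    m ∈ multiples (insert b F) ↔ b ∣ m ∨ m ∈ multiples F :=
  Set.exists_mem_insert

/-- A non-multiple of `F` divisible by `b` is `b * j` with `j` a non-multiple of `F`. -/
lemma cnt_compl_multiples_le_cnt_compl_multiples_insert_add (b : ℕ) (F : Set ℕ) (N : ℕ) :
    cnt (multiples F)ᶜ (b * N) ≤ cnt (multiples (insert b F))ᶜ (b * N) + cnt (multiples F)ᶜ N := by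
  have hsub : (multiples F)ᶜ ∩ Set.Icc 1 (b * N) ⊆
      (multiples (insert b F))ᶜ ∩ Set.Icc 1 (b * N) ∪
        (b * ·) '' ((multiples F)ᶜ ∩ Set.Icc 1 N) := by
    rintro m ⟨hmF, hm1, hmN⟩
    by_cases hbm : b ∣ m
    · obtain ⟨j, rfl⟩ := hbm
      have hb : 0 < b := Nat.pos_of_mul_pos_right hm1
      refine Or.inr ⟨j, ⟨fun ⟨a, ha, haj⟩ => hmF ⟨a, ha, haj.mul_left b⟩,
        Nat.pos_of_mul_pos_left hm1, Nat.le_of_mul_le_mul_left hmN hb⟩, rfl⟩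
    · exact Or.inl ⟨fun h => (mem_multiples_insert.1 h).elim hbm hmF, hm1, hmN⟩
  calc cnt (multiples F)ᶜ (b * N)
      ≤ ((multiples (insert b F))ᶜ ∩ Set.Icc 1 (b * N) ∪
          (b * ·) '' ((multiples F)ᶜ ∩ Set.Icc 1 N)).ncard :=
        Set.ncard_le_ncard hsub
    _ ≤ _ := (Set.ncard_union_le _ _).trans (Nat.add_le_add_left
        (Set.ncard_image_le ((Set.finite_Icc 1 N).inter_of_right _)) _)

/-- The Heilbronn–Rohrbach inequality, counted over the period `∏ a ∈ F, a`. -/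
lemma prod_one_sub_one_div_le_cnt_compl_multiples (F : Finset ℕ) (hF : 0 ∉ F) :
    ∏ a ∈ F, (1 - 1 / (a : ℝ)) ≤ cnt (multiples ↑F)ᶜ (∏ a ∈ F, a) / (∏ a ∈ F, a : ℕ) := by
  induction F using Finset.induction_on with
  | empty => simp [cnt, multiples]
  | insert b F hbF ih =>
    rw [Finset.mem_insert, not_or] at hF
    set L := ∏ a ∈ F, a
    have hb : (1 : ℝ) ≤ b := by exact_mod_cast Nat.one_le_iff_ne_zero.2 (Ne.symm hF.1)
    have hL : (0 : ℝ) < L := by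
      exact_mod_cast Finset.prod_pos fun a ha => Nat.pos_of_ne_zero fun h => hF.2 (h ▸ ha)
    have hper : Function.Periodic (· ∈ (multiples ↑F)ᶜ) L :=
      (multiples_periodic fun a ha => Finset.dvd_prod_of_mem _ ha).comp Not
    have hcount : b * cnt (multiples ↑F)ᶜ L ≤
        cnt (multiples ↑(insert b F))ᶜ (b * L) + cnt (multiples ↑F)ᶜ L := by
      rw [← cnt_mul_period hper, Finset.coe_insert]
      exact cnt_compl_multiples_le_cnt_compl_multiples_insert_add b ↑F L
    have hcountR : ((b : ℝ) - 1) * cnt (multiples ↑F)ᶜ L ≤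
        cnt (multiples ↑(insert b F))ᶜ (b * L) := by
      have : (b : ℝ) * cnt (multiples ↑F)ᶜ L ≤
          cnt (multiples ↑(insert b F))ᶜ (b * L) + cnt (multiples ↑F)ᶜ L := by
        exact_mod_cast hcount
      linarith
    rw [Finset.prod_insert hbF, Finset.prod_insert hbF]
    calc (1 - 1 / (b : ℝ)) * ∏ a ∈ F, (1 - 1 / (a : ℝ))
        ≤ (1 - 1 / (b : ℝ)) * (cnt (multiples ↑F)ᶜ L / L) :=
          mul_le_mul_of_nonneg_left (ih hF.2)
            (by rw [sub_nonneg, div_le_one (by linarith)]; exact hb)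
      _ = ((b : ℝ) - 1) * cnt (multiples ↑F)ᶜ L / (b * L) := by field_simp
      _ ≤ _ := by rw [Nat.cast_mul]; exact div_le_div_of_nonneg_right hcountR (by positivity)

lemma prod_one_sub_one_div_le_one_sub_of_hasDensity {F : Finset ℕ} (hF : 0 ∉ F) {δ : ℝ}
    (hδ : HasDensity (multiples ↑F) δ) : ∏ a ∈ F, (1 - 1 / (a : ℝ)) ≤ 1 - δ := by
  have hL : 0 < ∏ a ∈ F, a := Finset.prod_pos fun a ha => Nat.pos_of_ne_zero fun h => hF (h ▸ ha)
  have hper : Function.Periodic (· ∈ (multiples ↑F)ᶜ) (∏ a ∈ F, a) :=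
    (multiples_periodic fun a ha => Finset.dvd_prod_of_mem _ ha).comp Not
  rw [tendsto_nhds_unique hδ.compl (hasDensity_of_periodic hL hper)]
  exact prod_one_sub_one_div_le_cnt_compl_multiples F hF

lemma exp_neg_two_mul_le_one_sub {x : ℝ} (hx0 : 0 ≤ x) (hx : x ≤ 1 / 2) :
    Real.exp (-(2 * x)) ≤ 1 - x := by
  rw [Real.exp_neg, inv_le_iff_one_le_mul₀ (Real.exp_pos _)]
  nlinarith [Real.add_one_le_exp (2 * x)]

lemma exp_neg_two_mul_sum_le_prod_one_sub {ι : Type*} {s : Finset ι} {x : ι → ℝ}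
    (hx : ∀ i ∈ s, 0 ≤ x i ∧ x i ≤ 1 / 2) :
    Real.exp (-(2 * ∑ i ∈ s, x i)) ≤ ∏ i ∈ s, (1 - x i) := by
  rw [Finset.mul_sum, ← Finset.sum_neg_distrib, Real.exp_sum]
  exact Finset.prod_le_prod (fun _ _ => (Real.exp_pos _).le)
    fun i hi => exp_neg_two_mul_le_one_sub (hx i hi).1 (hx i hi).2

namespace Thin

variable {A : Set ℕ}

lemma mono {B : Set ℕ} (hB : Thin B) (h : A ⊆ B) : Thin A :=
  Summable.comp_injective hB (i := Set.inclusion h) (Set.inclusion_injective h)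

lemma summable_indicator (hA : Thin A) : Summable (A.indicator fun a : ℕ => 1 / (a : ℝ)) :=
  summable_subtype_iff_indicator.1 hA

lemma sum_le_tsum (hA : Thin A) {s : Finset ℕ} (hs : ↑s ⊆ A) :
    ∑ a ∈ s, 1 / (a : ℝ) ≤ ∑' a : A, 1 / (a : ℝ) := by
  rw [tsum_subtype A (fun a : ℕ => 1 / (a : ℝ)),
    ← Finset.sum_congr rfl fun a ha => Set.indicator_of_mem (hs ha) (fun a : ℕ => 1 / (a : ℝ))]
  exact hA.summable_indicator.sum_le_tsum s fun a _ =>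
    Set.indicator_nonneg (fun a _ => by positivity) a

lemma cnt_multiples_le (hA : Thin A) (N : ℕ) :
    (cnt (multiples A) N : ℝ) ≤ N * ∑' a : A, 1 / (a : ℝ) := by
  classical
  set s := {a ∈ Finset.Icc 1 N | a ∈ A}
  have hcover : {m ∈ Finset.Icc 1 N | m ∈ multiples A} ⊆
      s.biUnion fun a => {m ∈ Finset.Ioc 0 N | a ∣ m} := by
    intro m hm
    obtain ⟨hmN, a, ha, ham⟩ := Finset.mem_filter.1 hm
    rw [Finset.mem_Icc] at hmN
    have haN : a ≤ N := (Nat.le_of_dvd hmN.1 ham).trans hmN.2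
    have ha1 : 1 ≤ a := Nat.pos_of_dvd_of_pos ham hmN.1
    simp only [Finset.mem_biUnion, Finset.mem_filter, Finset.mem_Icc, Finset.mem_Ioc, s]
    exact ⟨a, ⟨⟨ha1, haN⟩, ha⟩, ⟨hmN.1, hmN.2⟩, ham⟩
  have hcard : cnt (multiples A) N ≤ ∑ a ∈ s, N / a := by
    rw [cnt_eq_card_filter]
    refine (Finset.card_le_card hcover).trans (Finset.card_biUnion_le.trans ?_)
    exact (Finset.sum_congr rfl fun a _ => Nat.Ioc_filter_dvd_card_eq_div N a).le
  calc (cnt (multiples A) N : ℝ)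
      ≤ ∑ a ∈ s, ((N / a : ℕ) : ℝ) := by exact_mod_cast hcard
    _ ≤ ∑ a ∈ s, N * (1 / (a : ℝ)) :=
        Finset.sum_le_sum fun a _ => by rw [mul_one_div]; exact Nat.cast_div_le
    _ = N * ∑ a ∈ s, 1 / (a : ℝ) := (Finset.mul_sum _ _ _).symm
    _ ≤ N * ∑' a : A, 1 / (a : ℝ) := by
        gcongr
        exact hA.sum_le_tsum fun a ha => (Finset.mem_filter.1 ha).2

lemma tendsto_tsum_inter_Ioi (hA : Thin A) :
    Tendsto (fun k : ℕ => ∑' a : ↥(A ∩ Set.Ioi k), 1 / (a : ℝ)) atTop (𝓝 0) := by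
  simp_rw [tsum_subtype (A ∩ Set.Ioi _) (fun a : ℕ => 1 / (a : ℝ))]
  rw [← tsum_zero]
  refine tendsto_tsum_of_dominated_convergence hA.summable_indicator (fun n => ?_)
    (Eventually.of_forall fun k n => ?_)
  · refine tendsto_const_nhds.congr' ?_
    filter_upwards [eventually_ge_atTop n] with k hk
    exact (Set.indicator_of_notMem (fun h => (not_lt.2 hk) h.2) _).symm
  · rw [Real.norm_of_nonneg (Set.indicator_nonneg (fun a _ => by positivity) n)]
    exact Set.indicator_le_indicator_of_subset Set.inter_subset_left
      (fun a => by positivity) n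

end Thin

open Classical in
noncomputable def truncation (A : Set ℕ) (k : ℕ) : Finset ℕ := {a ∈ Finset.Icc 1 k | a ∈ A}

lemma mem_truncation {A : Set ℕ} {k a : ℕ} : a ∈ truncation A k ↔ (1 ≤ a ∧ a ≤ k) ∧ a ∈ A := by
  unfold truncation
  simp only [Finset.mem_filter, Finset.mem_Icc]

lemma coe_truncation_subset (A : Set ℕ) (k : ℕ) : ↑(truncation A k) ⊆ A :=
  fun _ ha => (mem_truncation.1 ha).2

lemma hasDensity_multiples_truncation (A : Set ℕ) (k : ℕ) :
    ∃ δ, HasDensity (multiples ↑(truncation A k)) δ :=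
  ⟨_, hasDensity_of_periodic k.factorial_pos (multiples_periodic fun _ ha =>
    Nat.dvd_factorial (mem_truncation.1 ha).1.1 (mem_truncation.1 ha).1.2)⟩

lemma Thin.dist_density_multiples_truncation_le {A : Set ℕ} (hA : Thin A) (k N : ℕ) :
    dist ((cnt (multiples A) N : ℝ) / N) ((cnt (multiples ↑(truncation A k)) N : ℝ) / N) ≤
      ∑' a : ↥(A ∩ Set.Ioi k), 1 / (a : ℝ) := by
  have hlower : cnt (multiples ↑(truncation A k)) N ≤ cnt (multiples A) N :=
    cnt_le_cnt_of_pos_imp (fun _ _ hm => multiples_mono (coe_truncation_subset A k) hm) N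
  have hsplit : cnt (multiples A) N ≤
      cnt (multiples ↑(truncation A k) ∪ multiples (A ∩ Set.Ioi k)) N := by
    refine cnt_le_cnt_of_pos_imp (fun m hm hmA => ?_) N
    obtain ⟨a, ha, ham⟩ := hmA
    by_cases hak : a ≤ k
    · exact Or.inl ⟨a, mem_truncation.2 ⟨⟨Nat.pos_of_dvd_of_pos ham hm, hak⟩, ha⟩, ham⟩
    · exact Or.inr ⟨a, ⟨ha, not_le.1 hak⟩, ham⟩
  have hupper : (cnt (multiples A) N : ℝ) ≤
      cnt (multiples ↑(truncation A k)) N + cnt (multiples (A ∩ Set.Ioi k)) N := by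
    exact_mod_cast hsplit.trans (cnt_union_le _ _ N)
  have htail := (hA.mono (Set.inter_subset_left (t := Set.Ioi k))).cnt_multiples_le N
  have hε : 0 ≤ ∑' a : ↥(A ∩ Set.Ioi k), 1 / (a : ℝ) := tsum_nonneg fun _ => by positivity
  rcases N.eq_zero_or_pos with rfl | hN
  · simpa using hε
  have hNR : (0 : ℝ) < N := by exact_mod_cast hN
  rw [Real.dist_eq, ← sub_div, abs_div, Nat.abs_cast, div_le_iff₀ hNR, abs_le]
  have : (cnt (multiples ↑(truncation A k)) N : ℝ) ≤ cnt (multiples A) N := by exact_mod_cast hlower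
  constructor <;> linarith [mul_nonneg hε hNR.le]

lemma cnt_setOf_exists_eq_mul (A : Set ℕ) :
    cnt {m : ℕ | ∃ a ∈ A, ∃ n : ℕ, 0 < n ∧ m = a * n} = cnt (multiples A) :=
  cnt_congr fun m hm => ⟨fun ⟨a, ha, n, _, hmn⟩ => ⟨a, ha, hmn ▸ dvd_mul_right a n⟩,
    fun ⟨a, ha, n, hmn⟩ => ⟨a, ha, n, Nat.pos_of_ne_zero (by rintro rfl; omega), hmn⟩⟩

theorem set_of_multiples_has_density_general
    (A : Set ℕ) (hthin : Thin A) :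
    ∃ d : ℝ, HasDensity {m : ℕ | ∃ a ∈ A, ∃ n : ℕ, 0 < n ∧ m = a * n} d ∧
      (1 ∉ A → d < 1) := by
  choose δ hδ using hasDensity_multiples_truncation A
  obtain ⟨d, hd, hδd⟩ := exists_tendsto_of_forall_dist_le hδ hthin.tendsto_tsum_inter_Ioi
    hthin.dist_density_multiples_truncation_le
  refine ⟨d, by rw [HasDensity, cnt_setOf_exists_eq_mul]; exact hd, fun h1 => ?_⟩
  have hlow (k : ℕ) : Real.exp (-(2 * ∑' a : A, 1 / (a : ℝ))) ≤ 1 - δ k := by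
    have htwo (a : ℕ) (ha : a ∈ truncation A k) : 2 ≤ a := by
      obtain ⟨⟨ha1, -⟩, haA⟩ := mem_truncation.1 ha
      exact (Nat.one_lt_iff_ne_zero_and_ne_one.2 ⟨by omega, fun h => h1 (h ▸ haA)⟩)
    calc Real.exp (-(2 * ∑' a : A, 1 / (a : ℝ)))
        ≤ Real.exp (-(2 * ∑ a ∈ truncation A k, 1 / (a : ℝ))) := by
          gcongr; exact hthin.sum_le_tsum (coe_truncation_subset A k)
      _ ≤ ∏ a ∈ truncation A k, (1 - 1 / (a : ℝ)) :=
          exp_neg_two_mul_sum_le_prod_one_sub fun a ha => ⟨by positivity,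
            one_div_le_one_div_of_le two_pos (by exact_mod_cast htwo a ha)⟩
      _ ≤ 1 - δ k := prod_one_sub_one_div_le_one_sub_of_hasDensity
          (fun h => by simpa using (mem_truncation.1 h).1.1) (hδ k)
  linarith [Real.exp_pos (-(2 * ∑' a : A, 1 / (a : ℝ))),
    ge_of_tendsto (tendsto_const_nhds.sub hδd) (Eventually.of_forall hlow)]

theorem set_of_multiples_has_density
    (A : Set ℕ) (hA0 : 0 ∉ A) (hthin : Thin A) :
    ∃ d : ℝ, HasDensity {m : ℕ | ∃ a ∈ A, ∃ n : ℕ, 0 < n ∧ m = a * n} d ∧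
      (1 ∉ A → d < 1) :=
  set_of_multiples_has_density_general A hthin
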